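/- Let f be a field of characteristic 0, λ ∈ f with λ ≠ 0, m ≥ 0 and k ≥ 1, and set μ = (m+k+1)λ. Let P = P^{(−1/λ)}_{mk}(x_0,…,x_{m+k}) ∈ f[x_0,…,x_{m+k}]. Then for every integer i with i ≥ m+1, the polynomial identity Σ_{j=0}^{m+k−i} (j + μ − λ(i+1))·x_j·∂P/∂x_{i+j} = 0 holds (the sum being empty, hence the identity trivial, when i > m+k). (This expresses that P is annihilated by the derivations implementing the action of the vector fields l_i = t^{i+1} d/dt, i ≥ m+1, on the coefficients of tensor fields h = Σ_j x_j t^{j+μ}(dt)^{−λ}, and hence is a G_{m+1}-invariant of F_{λμ}.) -/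

import Mathlib

open scoped Classical

noncomputable section

/-- The generalized multinomial coefficient `(c choose p₁,…,p_{m+k})` attached to a
partition `π` of `n`: numerator `c(c−1)⋯(c−ℓ(π)+1)`, denominator `∏ pᵢ!`. -/
def partMultCoeff {f : Type*} [Field f] (c : f) {n : ℕ} (π : Nat.Partition n) : f :=
  (∏ j ∈ Finset.range (Multiset.card π.parts), (c - j)) /
    ∏ i ∈ Finset.Icc 1 n, ((π.parts.count i).factorial : f)

/-- The polynomial `P^{(c)}_{mk} = Σ_π (c choose p₁,…,p_{m+k}) x₀^{p₀} x₁^{p₁} ⋯`,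
summed over partitions `π = (1^{p₁} 2^{p₂} ⋯)` of `m+k` with largest part `> m`,
where `p₀ = k − ℓ(π)`. -/
def Ppoly (f : Type*) [Field f] (c : f) (m k : ℕ) : MvPolynomial ℕ f :=
  ∑ π ∈ Finset.univ.filter (fun π : Nat.Partition (m + k) => ∃ a ∈ π.parts, m < a),
    MvPolynomial.C (partMultCoeff c π) * MvPolynomial.X 0 ^ (k - Multiset.card π.parts) *
      ∏ i ∈ Finset.Icc 1 (m + k), MvPolynomial.X i ^ (π.parts.count i)

/-!
Write `P = Σ_π w(π) x^{e(π)}`. The operator `x_j ∂/∂x_{i+j}` sends the term of a partition `π`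
of `m+k` containing the part `i+j` to a multiple of the monomial of the partition `σ` of
`n = m+k−i` obtained by replacing that part by `j` (deleting it if `j = 0`); since `i > m`, every
such `π` occurs in `P`, and `ℓ(σ) ≤ n < k`. Relative to `w(σ)`, the resulting coefficient is the
multiplicity `p_j(σ)` for `j ≥ 1` and `c − ℓ(σ)` for `j = 0`. So the coefficient of `x^{e(σ)}` in
the annihilation sum is `w(σ)` times `Σ_j (j + λn) p_j(σ) + λn (c − ℓ(σ)) = n (1 + λc)`, which
vanishes for `c = −1/λ`.
-/

open Finset MvPolynomial
open scoped Nat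

namespace Nat.Partition

theorem sum_filter_mem_parts {M : Type*} [AddCommMonoid M] {n n' a : ℕ} (ha : 0 < a)
    (hn : n' + a = n) (F : Multiset ℕ → M) :
    ∑ π ∈ univ.filter (fun π : n.Partition => a ∈ π.parts), F π.parts =
      ∑ τ : n'.Partition, F (a ::ₘ τ.parts) := by
  obtain rfl : n' = n - a := by omega
  rw [sum_subtype (p := fun π : n.Partition => a ∈ π.parts) _ (fun π => by simp)]
  exact Fintype.sum_equiv (partitionWithPartEquiv ha (by omega)) _ _ fun π => by
    rw [← partitionWithPartEquiv_symm_apply_parts ha (by omega), Equiv.symm_apply_apply]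

theorem card_parts_le {n : ℕ} (p : n.Partition) : Multiset.card p.parts ≤ n := by
  simpa [p.parts_sum] using Multiset.card_nsmul_le_sum fun x hx => p.parts_pos hx

theorem sum_range_count_succ_mul {n : ℕ} (p : n.Partition) :
    ∑ j ∈ range n, p.parts.count (j + 1) * (j + 1) = n := by
  rw [range_eq_Ico, sum_Ico_add' (fun a => p.parts.count a * a), zero_add,
    Ico_add_one_right_eq_Icc]
  simpa [toFinsuppAntidiag] using
    (mem_finsuppAntidiag.mp p.toFinsuppAntidiag_mem_finsuppAntidiag).1

theorem sum_range_count_succ {n : ℕ} (p : n.Partition) :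
    ∑ j ∈ range n, p.parts.count (j + 1) = Multiset.card p.parts := by
  rw [range_eq_Ico, sum_Ico_add' p.parts.count, zero_add, Ico_add_one_right_eq_Icc,
    ← Multiset.toFinset_sum_count_eq]
  refine (sum_subset (fun a ha => ?_) fun a _ ha => Multiset.count_eq_zero.mpr ?_).symm
  · have ha := Multiset.mem_toFinset.mp ha
    exact mem_Icc.mpr ⟨p.parts_pos ha, p.le_of_mem_parts ha⟩
  · simpa using ha

theorem sum_range_add_mul_count_succ {R : Type*} [CommRing R] {n : ℕ} (p : n.Partition)
    (x w : R) :
    ∑ j ∈ range n, (((j + 1 : ℕ) : R) + x) * (w * p.parts.count (j + 1)) =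
      w * (n + x * Multiset.card p.parts) := by
  have hmul : ∑ j ∈ range n, (p.parts.count (j + 1) : R) * (j + 1) = n := by
    exact_mod_cast congrArg (Nat.cast (R := R)) p.sum_range_count_succ_mul
  have hcard : ∑ j ∈ range n, (p.parts.count (j + 1) : R) = Multiset.card p.parts := by
    exact_mod_cast congrArg (Nat.cast (R := R)) p.sum_range_count_succ
  rw [← hmul, ← hcard, mul_sum, ← sum_add_distrib, mul_sum]
  exact sum_congr rfl fun j _ => by push_cast; ring

end Nat.Partition

theorem Multiset.prod_factorial_count_cons {s : Multiset ℕ} {a : ℕ} {T : Finset ℕ} (ha : a ∈ T) :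
    ∏ b ∈ T, ((a ::ₘ s).count b)! = (s.count a + 1) * ∏ b ∈ T, (s.count b)! := by
  have hfac (b : ℕ) :
      ((a ::ₘ s).count b)! = (s.count b)! * if b = a then s.count a + 1 else 1 := by
    by_cases hb : b = a
    · subst hb; rw [count_cons_self, if_pos rfl, Nat.factorial_succ, mul_comm]
    · rw [count_cons_of_ne hb, if_neg hb, mul_one]
  rw [prod_congr rfl fun b _ => hfac b, prod_mul_distrib, prod_ite_eq', if_pos ha, mul_comm]

def partExponent (k : ℕ) (s : Multiset ℕ) : ℕ →₀ ℕ :=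
  Finsupp.single 0 (k - Multiset.card s) + Multiset.toFinsupp s

theorem partExponent_cons (k a : ℕ) (s : Multiset ℕ) :
    partExponent k (a ::ₘ s) = Finsupp.single a 1 +
      (Finsupp.single 0 (k - (Multiset.card s + 1)) + Multiset.toFinsupp s) := by
  rw [partExponent, Multiset.card_cons, ← Multiset.singleton_add, Multiset.toFinsupp_add,
    Multiset.toFinsupp_singleton, add_left_comm]

theorem partExponent_apply_of_ne_zero (k : ℕ) (s : Multiset ℕ) {a : ℕ} (ha : a ≠ 0) :
    partExponent k s a = s.count a := by
  simp [partExponent, Ne.symm ha]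

section Field

variable {f : Type*} [Field f]

/-- `partMultCoeff` on bare multisets, so that it also applies to the parts of partitions of
numbers smaller than `n`. -/
def multCoeff (c : f) (n : ℕ) (s : Multiset ℕ) : f :=
  (∏ j ∈ range (Multiset.card s), (c - j)) / ∏ i ∈ Icc 1 n, ((s.count i)! : f)

theorem Ppoly_eq_sum_monomial (c : f) (m k : ℕ) :
    Ppoly f c m k = ∑ π ∈ univ.filter (fun π : (m + k).Partition => ∃ a ∈ π.parts, m < a),
      monomial (partExponent k π.parts) (multCoeff c (m + k) π.parts) := by
  refine sum_congr rfl fun π _ => ?_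
  have hprod : ∏ a ∈ Icc 1 (m + k), (X a : MvPolynomial ℕ f) ^ π.parts.count a =
      monomial (Multiset.toFinsupp π.parts) 1 := by
    rw [← prod_X_pow_eq_monomial, Multiset.toFinsupp_support]
    refine (prod_subset (fun a ha => ?_) fun a _ ha => ?_).symm
    · have ha := Multiset.mem_toFinset.mp ha
      exact mem_Icc.mpr ⟨π.parts_pos ha, π.le_of_mem_parts ha⟩
    · rw [Multiset.count_eq_zero.mpr (by simpa using ha), pow_zero]
  rw [hprod, C_mul_X_pow_eq_monomial, monomial_mul, mul_one]
  rfl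

theorem X_mul_pderiv_Ppoly (c : f) {m k a n' : ℕ} (j : ℕ) (ha : m < a) (hn : n' + a = m + k) :
    X j * pderiv a (Ppoly f c m k) = ∑ τ : n'.Partition,
      monomial (Finsupp.single j 1 +
          (Finsupp.single 0 (k - (Multiset.card τ.parts + 1)) + Multiset.toFinsupp τ.parts))
        (multCoeff c (m + k) (a ::ₘ τ.parts) * (τ.parts.count a + 1)) := by
  set F : Multiset ℕ → MvPolynomial ℕ f := fun s =>
    monomial (Finsupp.single j 1 + (partExponent k s - Finsupp.single a 1))
      (multCoeff c (m + k) s * s.count a)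
  have hterm (π : (m + k).Partition) :
      X j * pderiv a (monomial (partExponent k π.parts) (multCoeff c (m + k) π.parts)) =
        F π.parts := by
    rw [pderiv_monomial, X, monomial_mul, one_mul, partExponent_apply_of_ne_zero k _ (by omega)]
  have hvanish (π : (m + k).Partition) (hπ : a ∉ π.parts) : F π.parts = 0 := by
    simp only [F, Multiset.count_eq_zero.mpr hπ, Nat.cast_zero, mul_zero, monomial_zero]
  calc X j * pderiv a (Ppoly f c m k)
      = ∑ π ∈ univ.filter (fun π : (m + k).Partition => ∃ b ∈ π.parts, m < b), F π.parts := by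
        rw [Ppoly_eq_sum_monomial, map_sum, mul_sum, sum_congr rfl fun π _ => hterm π]
    _ = ∑ π ∈ univ.filter (fun π : (m + k).Partition => a ∈ π.parts), F π.parts :=
        (sum_subset (fun π => by simpa using fun h => ⟨a, h, ha⟩)
          fun π _ hπ => hvanish π (by simpa using hπ)).symm
    _ = _ := by
        refine (Nat.Partition.sum_filter_mem_parts (by omega) hn F).trans
          (sum_congr rfl fun τ _ => ?_)
        dsimp only [F]
        rw [partExponent_cons, add_tsub_cancel_left, Multiset.count_cons_self, Nat.cast_succ]

variable [CharZero f]

theorem multCoeff_cons (c : f) {n a : ℕ} (s : Multiset ℕ) (ha : a ∈ Icc 1 n) :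
    multCoeff c n (a ::ₘ s) * (s.count a + 1) = (c - Multiset.card s) * multCoeff c n s := by
  have hD : (∏ b ∈ Icc 1 n, ((a ::ₘ s).count b)! : f) =
      (s.count a + 1) * ∏ b ∈ Icc 1 n, ((s.count b)! : f) := by
    exact_mod_cast congrArg (Nat.cast (R := f)) (Multiset.prod_factorial_count_cons (s := s) ha)
  have hne : (∏ b ∈ Icc 1 n, ((s.count b)! : f)) ≠ 0 :=
    prod_ne_zero_iff.mpr fun b _ => Nat.cast_ne_zero.mpr (Nat.factorial_ne_zero _)
  have hne' : (s.count a + 1 : f) ≠ 0 := Nat.cast_add_one_ne_zero _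
  rw [multCoeff, multCoeff, hD, Multiset.card_cons, prod_range_succ]
  field_simp

theorem X_zero_mul_pderiv_Ppoly (c : f) {m k i n : ℕ} (hi : m < i) (hn : n + i = m + k) :
    X 0 * pderiv i (Ppoly f c m k) = ∑ σ : n.Partition, monomial (partExponent k σ.parts)
      ((c - Multiset.card σ.parts) * multCoeff c (m + k) σ.parts) := by
  rw [X_mul_pderiv_Ppoly c 0 hi hn]
  refine sum_congr rfl fun σ _ => ?_
  have hcard := σ.card_parts_le
  rw [← add_assoc, ← Finsupp.single_add,
    show 1 + (k - (Multiset.card σ.parts + 1)) = k - Multiset.card σ.parts by omega,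
    multCoeff_cons c _ (mem_Icc.mpr ⟨by omega, by omega⟩)]
  rfl

theorem X_mul_pderiv_Ppoly_of_pos (c : f) {m k i j n : ℕ} (hi : m < i) (hj : 0 < j)
    (hjn : j ≤ n) (hn : n + i = m + k) :
    X j * pderiv (i + j) (Ppoly f c m k) = ∑ σ : n.Partition,
      monomial (partExponent k σ.parts) (multCoeff c (m + k) σ.parts * σ.parts.count j) := by
  obtain ⟨n', rfl⟩ := Nat.exists_eq_add_of_le' hjn
  set G : Multiset ℕ → MvPolynomial ℕ f := fun s =>
    monomial (partExponent k s) (multCoeff c (m + k) s * s.count j)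
  have hvanish (σ : (n' + j).Partition) (hσ : j ∉ σ.parts) : G σ.parts = 0 := by
    simp only [G, Multiset.count_eq_zero.mpr hσ, Nat.cast_zero, mul_zero, monomial_zero]
  rw [X_mul_pderiv_Ppoly c j (by omega) (by omega : n' + (i + j) = m + k),
    ← sum_filter_of_ne fun σ _ hσ => not_imp_comm.mp (hvanish σ) hσ,
    Nat.Partition.sum_filter_mem_parts hj rfl G]
  refine sum_congr rfl fun τ _ => ?_
  dsimp only [G]
  rw [partExponent_cons, Multiset.count_cons_self, Nat.cast_succ,
    multCoeff_cons c _ (mem_Icc.mpr ⟨by omega, by omega⟩),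
    multCoeff_cons c _ (mem_Icc.mpr ⟨by omega, by omega⟩)]

end Field

theorem Ppoly_annihilated_general (f : Type*) [Field f] [CharZero f] (lam : f) (hlam : lam ≠ 0)
    (m k : ℕ) :
    ∀ i : ℕ, m + 1 ≤ i →
      ∑ j ∈ (Finset.range (m + k + 1)).filter (fun j => i + j ≤ m + k),
        MvPolynomial.C ((j : f) + ((m + k + 1 : ℕ) : f) * lam - lam * ((i : f) + 1)) *
          MvPolynomial.X j *
          MvPolynomial.pderiv (i + j) (Ppoly f (-lam⁻¹) m k) = 0 := by
  intro i hi
  rcases lt_or_ge (m + k) i with hin | hin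
  · exact sum_eq_zero fun j hj => absurd (mem_filter.mp hj).2 (by omega)
  obtain ⟨n, hn⟩ := Nat.exists_eq_add_of_le' hin
  have hrange : (range (m + k + 1)).filter (fun j => i + j ≤ m + k) = range (n + 1) := by
    ext j; simp only [mem_filter, mem_range]; omega
  have hcoeff (j : ℕ) :
      (j : f) + ((m + k + 1 : ℕ) : f) * lam - lam * ((i : f) + 1) = j + lam * n := by
    rw [hn]; push_cast; ring
  simp only [hrange, hcoeff, mul_assoc]
  rw [sum_range_succ', sum_congr rfl fun j hj => by
      rw [X_mul_pderiv_Ppoly_of_pos _ (by omega) j.succ_pos (mem_range.mp hj) hn.symm],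
    Nat.add_zero, X_zero_mul_pderiv_Ppoly _ (by omega) hn.symm]
  simp only [mul_sum, C_mul_monomial]
  rw [sum_comm, ← sum_add_distrib]
  refine sum_eq_zero fun σ _ => ?_
  have hc : lam * -lam⁻¹ = -1 := by field_simp
  rw [← map_sum, ← map_add, σ.sum_range_add_mul_count_succ,
    ← map_zero (monomial (R := f) (partExponent k σ.parts))]
  congr 1
  linear_combination (n * multCoeff (-lam⁻¹) (m + k) σ.parts) * hc

/-- Let `f` be a field of characteristic `0`, `λ ≠ 0`, `m ≥ 0`, `k ≥ 1`,
`μ = (m+k+1)λ`, and `P = P^{(−1/λ)}_{mk}`.  Then for every `i ≥ m+1`,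
`Σ_{j=0}^{m+k−i} (j + μ − λ(i+1))·x_j·∂P/∂x_{i+j} = 0` (an empty sum for `i > m+k`):
`P` is annihilated by the action of the vector fields `lᵢ = t^{i+1} d/dt`, `i ≥ m+1`,
on the coefficients of tensor fields `h = Σ_j x_j t^{j+μ}(dt)^{−λ}`, i.e. it is a
`G_{m+1}`-invariant of `F_{λμ}`. -/
theorem Ppoly_annihilated (f : Type*) [Field f] [CharZero f] (lam : f) (hlam : lam ≠ 0)
    (m k : ℕ) (hk : 1 ≤ k) :
    ∀ i : ℕ, m + 1 ≤ i →
      ∑ j ∈ (Finset.range (m + k + 1)).filter (fun j => i + j ≤ m + k),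
        MvPolynomial.C ((j : f) + ((m + k + 1 : ℕ) : f) * lam - lam * ((i : f) + 1)) *
          MvPolynomial.X j *
          MvPolynomial.pderiv (i + j) (Ppoly f (-lam⁻¹) m k) = 0 :=
  Ppoly_annihilated_general f lam hlam m k

end
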